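/- arXiv:2008.11197 — 2 statements merged into one kernel-verified Lean document; each statement's English description precedes it below -/
import Mathlib

section
/- Let G = (V, E) be a connected, locally finite graph, let k ≥ 1, and let A be a finite subset of V with |A| ≥ 3^k. Then there exist m ≥ 3^{k-1} + 1 and disjoint nonempty sets E₁, …, E_m ⊆ E such that: (1) each Eᵢ spans a connected subgraph of G; (2) every vertex of V is incident to some edge in ⋃ᵢ Eᵢ; (3) the set Vᵢ of vertices incident to an edge of Eᵢ satisfies 3^{-k}|A| ≤ |A ∩ Vᵢ| < 3^{-k+1}|A| for each 1 ≤ i ≤ m. -/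
open SimpleGraph

/-- A set of edges spans a connected subgraph: the graph whose edges are exactly the
given edges, induced on the set of vertices incident to one of these edges, is connected. -/
def SpansConnected {V : Type*} (s : Set (Sym2 V)) : Prop :=
  (SimpleGraph.induce {v : V | ∃ e ∈ s, v ∈ e} (SimpleGraph.fromEdgeSet s)).Connected

/-!
Root a breadth-first spanning tree of `G` at a vertex `r` of `A`: every vertex `v ≠ r` gets a
neighbour `p v` closer to `r`, and `s(v, p v)` is an edge. Weigh a vertex set by the number of
points of `A` in it and put `c = |A| / 3^k ≥ 1`. While the remaining tree weighs at least `3c`,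
take a deepest vertex `v` whose subtree weighs at least `c`. Its child subtrees, finitely many as
`G` is locally finite, weigh less than `c` each, so either a greedy choice of them has total
weight in `[c, 2c)` and is cut off hanging from `v`, or the subtree of `v` itself weighs less
than `c + 1 ≤ 2c` and is cut off hanging from `p v`. A piece together with the vertex it hangs
from weighs between `c` and `2c + 1 ≤ 3c`, and so does the final remainder. The parent edges of
the vertices of a piece form a connected edge set; those of different pieces are disjoint, and
together they cover every vertex. Since every point of `A` is counted by some piece and each
piece counts fewer than `3c`, there are more than `|A| / 3c = 3^(k-1)` pieces.
-/

open Set Function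

section

variable {V : Type*}

theorem Finset.exists_subset_le_sum_lt_add {ι α : Type*} [AddCommGroup α] [LinearOrder α]
    [IsOrderedAddMonoid α] {f : ι → α} {c : α} (hc : 0 < c) (s : Finset ι)
    (hf : ∀ i ∈ s, f i < c) (hs : c ≤ ∑ i ∈ s, f i) :
    ∃ t ⊆ s, c ≤ ∑ i ∈ t, f i ∧ ∑ i ∈ t, f i < c + c := by
  classical
  induction s using Finset.induction_on with
  | empty => exact absurd hs (by simpa using hc)
  | insert i s hi ih =>
    by_cases h : ∑ j ∈ insert i s, f j < c + c
    · exact ⟨insert i s, subset_rfl, hs, h⟩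
    rw [Finset.sum_insert hi, not_lt] at h
    have hlt : c < ∑ j ∈ s, f j :=
      lt_of_add_lt_add_left ((add_lt_add_left (hf i (Finset.mem_insert_self i s)) c).trans_le h)
    obtain ⟨t, hts, ht⟩ := ih (fun j hj => hf j (Finset.mem_insert_of_mem hj)) hlt.le
    exact ⟨t, hts.trans (Finset.subset_insert i s), ht⟩

noncomputable def weight (A : Finset V) (X : Set V) : ℕ := ((A : Set V) ∩ X).ncard

section weight

variable (A : Finset V) {X Y : Set V}

theorem weight_univ : weight A univ = A.card := by
  rw [weight, inter_univ, ncard_coe_finset]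

theorem weight_mono (h : X ⊆ Y) : weight A X ≤ weight A Y :=
  ncard_le_ncard (inter_subset_inter_right _ h) (A.finite_toSet.inter_of_left Y)

theorem weight_insert_le (a : V) (X : Set V) : weight A (insert a X) ≤ weight A X + 1 := by
  refine (ncard_le_ncard ?_ ((A.finite_toSet.inter_of_left X).insert a)).trans (ncard_insert_le _ _)
  rintro x ⟨hxA, rfl | hx⟩
  exacts [mem_insert x _, Or.inr ⟨hxA, hx⟩]

theorem weight_union (h : Disjoint X Y) : weight A (X ∪ Y) = weight A X + weight A Y := by
  rw [weight, inter_union_distrib_left]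
  exact ncard_union_eq (h.mono inter_subset_right inter_subset_right)
    (A.finite_toSet.inter_of_left X) (A.finite_toSet.inter_of_left Y)

theorem weight_diff_add (h : Y ⊆ X) : weight A (X \ Y) + weight A Y = weight A X := by
  rw [← weight_union A disjoint_sdiff_left, sdiff_union_of_subset h]

theorem weight_biUnion {ι : Type*} (s : Finset ι) {X : ι → Set V}
    (h : (s : Set ι).PairwiseDisjoint X) : weight A (⋃ i ∈ s, X i) = ∑ i ∈ s, weight A (X i) := by
  classical
  induction s using Finset.induction_on with
  | empty => simp [weight]
  | insert i s hi ih =>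
    rw [Finset.set_biUnion_insert, Finset.sum_insert hi, weight_union, ih (h.subset (by simp))]
    refine disjoint_iUnion₂_right.mpr fun j hj => h (by simp) (by simp [hj]) ?_
    rintro rfl
    exact hi hj

theorem exists_mem_of_weight_pos (h : 0 < weight A X) : ∃ a ∈ A, a ∈ X := by
  obtain ⟨a, ha, hx⟩ := nonempty_of_ncard_ne_zero h.ne'
  exact ⟨a, ha, hx⟩

theorem card_le_sum_weight {ι : Type*} [Fintype ι] (W : ι → Set V)
    (h : ∀ v, ∃ i, v ∈ W i) : A.card ≤ ∑ i, weight A (W i) := by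
  have := Finset.set_ncard_biUnion_le Finset.univ fun i => (A : Set V) ∩ W i
  simpa only [weight, Finset.mem_univ, iUnion_true, ← inter_iUnion, iUnion_eq_univ_iff.mpr h,
    inter_univ, ncard_coe_finset] using this

end weight

def descendants (p : V → V) (v : V) : Set V := {u | ∃ n, p^[n] u = v}

section descendants

variable {p : V → V} {u v w x : V}

theorem mem_descendants_self : v ∈ descendants p v := ⟨0, rfl⟩

theorem mem_descendants_of_map_eq (h : p u = v) : u ∈ descendants p v := ⟨1, h⟩

theorem mem_descendants_of_map_mem (h : p u ∈ descendants p v) : u ∈ descendants p v :=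
  let ⟨n, hn⟩ := h; ⟨n + 1, hn⟩

theorem map_mem_descendants (h : u ∈ descendants p v) (hne : u ≠ v) : p u ∈ descendants p v := by
  obtain ⟨_ | n, hn⟩ := h
  · exact absurd hn hne
  · exact ⟨n, hn⟩

theorem mem_descendants_or_mem_descendants (hv : x ∈ descendants p v) (hw : x ∈ descendants p w) :
    v ∈ descendants p w ∨ w ∈ descendants p v := by
  obtain ⟨m, rfl⟩ := hv
  obtain ⟨n, rfl⟩ := hw
  rcases le_total m n with h | h
  · exact Or.inl ⟨n - m, by rw [← iterate_add_apply, Nat.sub_add_cancel h]⟩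
  · exact Or.inr ⟨m - n, by rw [← iterate_add_apply, Nat.sub_add_cancel h]⟩

theorem exists_map_eq_of_mem_descendants (h : u ∈ descendants p v) (hne : u ≠ v) :
    ∃ w, p w = v ∧ w ≠ v ∧ u ∈ descendants p w := by
  obtain ⟨n, hn⟩ := h
  induction n generalizing u with
  | zero => exact absurd hn hne
  | succ n ih =>
    by_cases hu : p u = v
    · exact ⟨u, hu, hne, mem_descendants_self⟩
    · obtain ⟨w, hw, hwv, hpu⟩ := ih hu hn
      exact ⟨w, hw, hwv, mem_descendants_of_map_mem hpu⟩

end descendants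

structure IsParentMap (p : V → V) (r : V) (d : V → ℕ) : Prop where
  map_root : p r = r
  rank_map_lt : ∀ v, v ≠ r → d (p v) < d v

def IsBranch (p : V → V) (t : V) (D : Set V) : Prop :=
  D.Nonempty ∧ ∀ v ∈ D, p v ∈ D ∨ p v = t

def parentEdges (p : V → V) (D : Set V) : Set (Sym2 V) := (fun v => s(v, p v)) '' D

section branches

variable {p : V → V} {U : Set V} {t : V} {g : Set V}

theorem isBranch_inter_biUnion_descendants (hU : MapsTo p U U) (hg : ∀ w ∈ g, p w = t)
    (hne : (U ∩ ⋃ w ∈ g, descendants p w).Nonempty) :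
    IsBranch p t (U ∩ ⋃ w ∈ g, descendants p w) := by
  refine ⟨hne, fun x ⟨hxU, hx⟩ => ?_⟩
  obtain ⟨w, hw, hxw⟩ := mem_iUnion₂.mp hx
  rcases eq_or_ne x w with rfl | hne
  · exact Or.inr (hg x hw)
  · exact Or.inl ⟨hU hxU, mem_iUnion₂.mpr ⟨w, hw, map_mem_descendants hxw hne⟩⟩

theorem mapsTo_diff_biUnion_descendants (hU : MapsTo p U U) :
    MapsTo p (U \ ⋃ w ∈ g, descendants p w) (U \ ⋃ w ∈ g, descendants p w) := by
  refine fun x ⟨hxU, hx⟩ => ⟨hU hxU, fun hpx => hx ?_⟩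
  obtain ⟨w, hw, hxw⟩ := mem_iUnion₂.mp hpx
  exact mem_iUnion₂.mpr ⟨w, hw, mem_descendants_of_map_mem hxw⟩

theorem setOf_mem_parentEdges (D : Set V) :
    {x | ∃ e ∈ parentEdges p D, x ∈ e} = D ∪ p '' D := by
  ext x
  simp only [parentEdges, mem_ofPred_eq, mem_image, exists_exists_and_eq_and, Sym2.mem_iff,
    mem_union]
  constructor
  · rintro ⟨v, hv, rfl | rfl⟩
    exacts [Or.inl hv, Or.inr ⟨v, hv, rfl⟩]
  · rintro (hx | ⟨v, hv, rfl⟩)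
    exacts [⟨x, hx, Or.inl rfl⟩, ⟨v, hv, Or.inr rfl⟩]

theorem isBranch_diff_root {r : V} (hU : MapsTo p U U) (hne : (U \ {r}).Nonempty) :
    IsBranch p r (U \ {r}) := by
  refine ⟨hne, fun v hv => ?_⟩
  by_cases hpv : p v = r
  exacts [Or.inr hpv, Or.inl ⟨hU hv.1, hpv⟩]

end branches

namespace IsParentMap

variable {p : V → V} {r : V} {d : V → ℕ} (hp : IsParentMap p r d) {u v w t : V} {D U : Set V}
  (A : Finset V) {c : ℝ}
include hp

theorem mem_descendants_root (v : V) : v ∈ descendants p r := by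
  induction hv : d v using Nat.strong_induction_on generalizing v with
  | _ n ih =>
    by_cases hvr : v = r
    · exact hvr ▸ mem_descendants_self
    · exact mem_descendants_of_map_mem (ih _ (hv ▸ hp.rank_map_lt v hvr) (p v) rfl)

theorem eq_root_of_root_mem_descendants (h : r ∈ descendants p v) : v = r := by
  obtain ⟨n, hn⟩ := h
  rw [← hn, iterate_fixed hp.map_root]

theorem rank_lt_of_mem_descendants (h : u ∈ descendants p v) (hne : u ≠ v) : d v < d u := by
  obtain ⟨n, rfl⟩ := h
  induction n generalizing u with
  | zero => exact absurd rfl hne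
  | succ n ih =>
    have hu : u ≠ r := by
      rintro rfl
      exact hne (iterate_fixed hp.map_root _).symm
    rcases eq_or_ne (p u) (p^[n] (p u)) with h | h
    · rw [iterate_succ_apply, ← h]
      exact hp.rank_map_lt u hu
    · exact (ih h).trans (hp.rank_map_lt u hu)

theorem rank_le_of_mem_descendants (h : u ∈ descendants p v) : d v ≤ d u := by
  rcases eq_or_ne u v with rfl | hne
  · exact le_rfl
  · exact (hp.rank_lt_of_mem_descendants h hne).le

theorem eq_of_mem_descendants_of_mem_descendants (huv : u ∈ descendants p v)
    (hvu : v ∈ descendants p u) : u = v := by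
  by_contra hne
  exact lt_asymm (hp.rank_lt_of_mem_descendants huv hne)
    (hp.rank_lt_of_mem_descendants hvu (Ne.symm hne))

theorem disjoint_descendants (hu : p u = v) (hw : p w = v) (huv : u ≠ v) (hwv : w ≠ v)
    (huw : u ≠ w) : Disjoint (descendants p u) (descendants p w) := by
  have key : ∀ {u w}, p u = v → p w = v → w ≠ v → u ≠ w → u ∉ descendants p w :=
    fun hu hw hwv huw h => hwv (hp.eq_of_mem_descendants_of_mem_descendants
      (mem_descendants_of_map_eq hw) (hu ▸ map_mem_descendants h huw))
  refine disjoint_left.mpr fun x hxu hxw => ?_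
  rcases mem_descendants_or_mem_descendants hxu hxw with h | h
  · exact key hu hw hwv huw h
  · exact key hw hu huv huw.symm h

theorem map_ne_self (hv : v ≠ r) : p v ≠ v :=
  fun h => (hp.rank_map_lt v hv).ne (congrArg d h)

theorem exists_map_eq_of_isBranch (hD : IsBranch p t D) (hr : r ∉ D) : ∃ v ∈ D, p v = t := by
  let v := argminOn d D hD.1
  have hv : v ∈ D := argminOn_mem d D hD.1
  refine ⟨v, hv, (hD.2 v hv).resolve_left fun h => not_lt_argminOn d D h ?_⟩
  exact hp.rank_map_lt v (ne_of_mem_of_not_mem hv hr)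

theorem exists_map_eq_root [Nontrivial V] : ∃ v, v ≠ r ∧ p v = r := by
  obtain ⟨v, hv, hpv⟩ := hp.exists_map_eq_of_isBranch (t := r) (D := {v | v ≠ r})
    ⟨exists_ne r, fun v _ => (em (p v = r)).symm⟩ fun h => h rfl
  exact ⟨v, hv, hpv⟩

theorem setOf_mem_parentEdges_of_isBranch (hD : IsBranch p t D) (hr : r ∉ D) :
    {x | ∃ e ∈ parentEdges p D, x ∈ e} = insert t D := by
  obtain ⟨v, hv, hvt⟩ := hp.exists_map_eq_of_isBranch hD hr
  ext x
  rw [setOf_mem_parentEdges]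
  constructor
  · rintro (hx | ⟨u, hu, rfl⟩)
    exacts [Or.inr hx, (hD.2 u hu).symm]
  · rintro (rfl | hx)
    exacts [Or.inr ⟨v, hv, hvt⟩, Or.inl hx]

theorem injOn_parentEdge : InjOn (fun v => s(v, p v)) {v | v ≠ r} := by
  intro v hv w hw h
  rcases Sym2.eq_iff.mp h with ⟨h, -⟩ | ⟨hvw, hwv⟩
  · exact h
  · have hv' := hp.rank_map_lt v hv
    have hw' := hp.rank_map_lt w hw
    rw [hwv] at hv'
    rw [← hvw] at hw'
    omega

theorem disjoint_parentEdges {D' : Set V} (hD : r ∉ D) (hD' : r ∉ D') (h : Disjoint D D') :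
    Disjoint (parentEdges p D) (parentEdges p D') :=
  h.image hp.injOn_parentEdge (fun _ hv hvr => hD (hvr ▸ hv)) (fun _ hv hvr => hD' (hvr ▸ hv))

theorem spansConnected_parentEdges (hD : IsBranch p t D) (hr : r ∉ D) :
    SpansConnected (parentEdges p D) := by
  rw [SpansConnected, hp.setOf_mem_parentEdges_of_isBranch hD hr,
    connected_iff_exists_forall_reachable]
  set H := (fromEdgeSet (parentEdges p D)).induce (insert t D)
  have hmem : ∀ v ∈ D, p v ∈ insert t D := fun v hv => (hD.2 v hv).symm
  have key : ∀ v (hv : v ∈ D), H.Reachable ⟨t, mem_insert t D⟩ ⟨v, Or.inr hv⟩ := by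
    intro v hv
    induction hn : d v using Nat.strong_induction_on generalizing v with
    | _ n ih =>
      have hvr : v ≠ r := ne_of_mem_of_not_mem hv hr
      have hadj : H.Adj ⟨p v, hmem v hv⟩ ⟨v, Or.inr hv⟩ :=
        ⟨⟨v, hv, Sym2.eq_swap⟩, hp.map_ne_self hvr⟩
      refine Reachable.trans ?_ hadj.reachable
      rcases hD.2 v hv with h | h
      · exact ih _ (hn ▸ hp.rank_map_lt v hvr) _ h rfl
      · simp only [h]
        rfl
  refine ⟨⟨t, mem_insert t D⟩, ?_⟩
  rintro ⟨v, rfl | hv⟩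
  exacts [Reachable.refl _, key v hv]

theorem weight_inter_descendants_root (U : Set V) :
    weight A (U ∩ descendants p r) = weight A U := by
  rw [inter_eq_left.mpr fun v _ => hp.mem_descendants_root v]

theorem root_notMem_biUnion_descendants {g : Set V} (hg : r ∉ g) :
    r ∉ ⋃ w ∈ g, descendants p w := by
  simp only [mem_iUnion₂, not_exists]
  exact fun w hw h => hg (hp.eq_root_of_root_mem_descendants h ▸ hw)

theorem weight_inter_biUnion_descendants (U : Set V) {g : Finset V} (hg : r ∉ g)
    (ht : ∀ w ∈ g, p w = t) :
    weight A (U ∩ ⋃ w ∈ g, descendants p w) = ∑ w ∈ g, weight A (U ∩ descendants p w) := by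
  rw [inter_iUnion₂, weight_biUnion]
  intro u hu w hw huw
  have hne : ∀ w ∈ g, w ≠ t := fun w hw hwt =>
    hp.map_ne_self (ne_of_mem_of_not_mem hw hg) (hwt ▸ ht w hw)
  exact (hp.disjoint_descendants (ht u hu) (ht w hw) (hne u hu) (hne w hw) huw).mono
    inter_subset_right inter_subset_right

theorem exists_heavy_with_light_children (hc : 0 < c) (hU : c ≤ weight A U) :
    ∃ v, c ≤ weight A (U ∩ descendants p v) ∧
      ∀ u, p u = v → u ≠ v → (weight A (U ∩ descendants p u) : ℝ) < c := by
  set H := {v | c ≤ (weight A (U ∩ descendants p v) : ℝ)}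
  have hrH : r ∈ H := by
    simpa only [H, mem_ofPred_eq, hp.weight_inter_descendants_root] using hU
  -- a heavy vertex is an ancestor of a point of `A`, which bounds its rank
  have hbdd : BddAbove (d '' H) := by
    refine ⟨A.sup d, ?_⟩
    rintro _ ⟨v, hv, rfl⟩
    obtain ⟨a, ha, -, hav⟩ := exists_mem_of_weight_pos A (X := U ∩ descendants p v)
      (by exact_mod_cast hc.trans_le hv)
    exact (hp.rank_le_of_mem_descendants hav).trans (Finset.le_sup ha)
  obtain ⟨v, hvH, hv⟩ := Nat.sSup_mem (s := d '' H) ⟨d r, r, hrH, rfl⟩ hbdd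
  refine ⟨v, hvH, fun u hpu huv => lt_of_not_ge fun hu => ?_⟩
  have h₁ := le_csSup hbdd ⟨u, hu, rfl⟩
  have h₂ := hp.rank_lt_of_mem_descendants (mem_descendants_of_map_eq hpu) huv
  omega

theorem exists_siblings_subtree_weight_mem_Ico (hfin : ∀ v, {u | p u = v}.Finite) (hc : 1 ≤ c)
    (hw : 3 * c ≤ weight A U) :
    ∃ t, ∃ g : Finset V, r ∉ g ∧ (∀ w ∈ g, p w = t) ∧
      c ≤ ∑ w ∈ g, (weight A (U ∩ descendants p w) : ℝ) ∧
      ∑ w ∈ g, (weight A (U ∩ descendants p w) : ℝ) < 2 * c := by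
  classical
  obtain ⟨v, hv, hlight⟩ := hp.exists_heavy_with_light_children A (by linarith) (by linarith)
  set K := (hfin v).toFinset.filter (· ≠ v)
  have hK : ∀ {u}, u ∈ K ↔ p u = v ∧ u ≠ v := by simp [K]
  have hrK : r ∉ K := fun h => (hK.mp h).2 (hp.map_root.symm.trans (hK.mp h).1)
  have hsplit : (weight A (U ∩ descendants p v) : ℝ) ≤
      ∑ w ∈ K, (weight A (U ∩ descendants p w) : ℝ) + 1 := by
    have hsub : U ∩ descendants p v ⊆ insert v (U ∩ ⋃ w ∈ K, descendants p w) := by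
      rintro x ⟨hxU, hxv⟩
      rcases eq_or_ne x v with rfl | hne
      · exact mem_insert x _
      · obtain ⟨w, hw, hwv, hxw⟩ := exists_map_eq_of_mem_descendants hxv hne
        exact Or.inr ⟨hxU, mem_iUnion₂.mpr ⟨w, hK.mpr ⟨hw, hwv⟩, hxw⟩⟩
    have h := (weight_mono A hsub).trans (weight_insert_le A v _)
    rw [hp.weight_inter_biUnion_descendants A U hrK fun w hw => (hK.mp hw).1] at h
    exact_mod_cast h
  by_cases hs : c ≤ ∑ w ∈ K, (weight A (U ∩ descendants p w) : ℝ)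
  · obtain ⟨g, hgK, hg⟩ := K.exists_subset_le_sum_lt_add (by linarith)
      (fun u hu => hlight u (hK.mp hu).1 (hK.mp hu).2) hs
    exact ⟨v, g, fun h => hrK (hgK h), fun w hw => (hK.mp (hgK hw)).1, hg.1, by linarith [hg.2]⟩
  · have hvr : v ≠ r := by
      rintro rfl
      rw [hp.weight_inter_descendants_root] at hsplit
      linarith
    refine ⟨p v, {v}, by simpa using hvr.symm, by simp, ?_, ?_⟩ <;>
      simp only [Finset.sum_singleton] <;> linarith

theorem exists_branch_weight_mem_Ico (hfin : ∀ v, {u | p u = v}.Finite) (hc : 1 ≤ c)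
    (hU : MapsTo p U U) (hw : 3 * c ≤ weight A U) :
    ∃ t D, D ⊆ U ∧ r ∉ D ∧ IsBranch p t D ∧ MapsTo p (U \ D) (U \ D) ∧
      c ≤ weight A D ∧ (weight A D : ℝ) < 2 * c := by
  obtain ⟨t, g, hrg, ht, hlow, hhigh⟩ := hp.exists_siblings_subtree_weight_mem_Ico A hfin hc hw
  have hD := hp.weight_inter_biUnion_descendants A U hrg ht
  have hpos : 0 < weight A (U ∩ ⋃ w ∈ g, descendants p w) := by
    rw [hD]
    exact_mod_cast (by linarith : (0 : ℝ) < ∑ w ∈ g, (weight A (U ∩ descendants p w) : ℝ))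
  refine ⟨t, _, inter_subset_left, fun h => hp.root_notMem_biUnion_descendants hrg h.2,
    isBranch_inter_biUnion_descendants hU ht ((nonempty_of_ncard_ne_zero hpos.ne').mono
      inter_subset_right), ?_, ?_, ?_⟩
  · rw [sdiff_self_inter]
    exact mapsTo_diff_biUnion_descendants hU
  · rw [Finset.set_biUnion_coe, hD]
    exact_mod_cast hlow
  · rw [Finset.set_biUnion_coe, hD]
    exact_mod_cast hhigh

theorem exists_branch_partition (hfin : ∀ v, {u | p u = v}.Finite) (hc : 1 ≤ c) (U : Set V)
    (hrU : r ∈ U) (hU : MapsTo p U U) (hw : c ≤ weight A U) :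
    ∃ P : List (V × Set V),
      (∀ q ∈ P, q.2 ⊆ U ∧ r ∉ q.2 ∧ IsBranch p q.1 q.2 ∧ c ≤ weight A (insert q.1 q.2) ∧
        (weight A (insert q.1 q.2) : ℝ) < 3 * c) ∧
      (∀ v ∈ U, v ≠ r → ∃ q ∈ P, v ∈ q.2) ∧ P.Pairwise (Disjoint on Prod.snd) := by
  induction hn : weight A U using Nat.strong_induction_on generalizing U with
  | _ n ih =>
  by_cases hsmall : (weight A U : ℝ) < 3 * c
  · rcases (U \ {r}).eq_empty_or_nonempty with h | h
    · refine ⟨[], by simp, fun v hv hvr => ?_, List.Pairwise.nil⟩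
      exact absurd (h.subset ⟨hv, hvr⟩) (notMem_empty v)
    have hins : insert r (U \ {r}) = U := by rw [insert_sdiff_singleton, insert_eq_of_mem hrU]
    refine ⟨[(r, U \ {r})], ?_, fun v hv hvr => ⟨_, List.mem_singleton_self _, hv, hvr⟩,
      List.pairwise_singleton _ _⟩
    simp only [List.mem_singleton, forall_eq, hins]
    exact ⟨sdiff_subset, fun h => h.2 rfl, isBranch_diff_root hU h, hw, hsmall⟩
  obtain ⟨t, D, hDU, hrD, hD, hUD, hlow, hhigh⟩ :=
    hp.exists_branch_weight_mem_Ico A hfin hc hU (not_lt.mp hsmall)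
  have hsum := weight_diff_add A hDU
  have hDpos : 0 < weight A D := by exact_mod_cast (by linarith : (0 : ℝ) < weight A D)
  have hrest : c ≤ weight A (U \ D) := by
    have : (weight A (U \ D) : ℝ) + weight A D = weight A U := by exact_mod_cast hsum
    linarith
  obtain ⟨P, hP, hcover, hdisj⟩ := ih _ (by omega) (U \ D) ⟨hrU, hrD⟩ hUD hrest rfl
  refine ⟨(t, D) :: P, ?_, fun v hv hvr => ?_, List.pairwise_cons.mpr ⟨fun q hq => ?_, hdisj⟩⟩
  · simp only [List.mem_cons, forall_eq_or_imp]
    refine ⟨⟨hDU, hrD, hD, hlow.trans (by exact_mod_cast weight_mono A (subset_insert t D)), ?_⟩,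
      fun q hq => ⟨(hP q hq).1.trans sdiff_subset, (hP q hq).2⟩⟩
    have : (weight A (insert t D) : ℝ) ≤ weight A D + 1 := by
      exact_mod_cast weight_insert_le A t D
    linarith
  · by_cases hvD : v ∈ D
    · exact ⟨_, List.mem_cons_self, hvD⟩
    · obtain ⟨q, hq, hvq⟩ := hcover v ⟨hv, hvD⟩ hvr
      exact ⟨q, List.mem_cons_of_mem _ hq, hvq⟩
  · exact disjoint_of_subset_right (hP q hq).1 disjoint_sdiff_right

theorem exists_parentEdges_partition [Nontrivial V] (hfin : ∀ v, {u | p u = v}.Finite)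
    (hc : 1 ≤ c) (hcA : c ≤ A.card) :
    ∃ (m : ℕ) (Es : Fin m → Set (Sym2 V)),
      (∀ i j, i ≠ j → Disjoint (Es i) (Es j)) ∧ (∀ i, (Es i).Nonempty) ∧
      (∀ i, Es i ⊆ parentEdges p {v | v ≠ r}) ∧ (∀ i, SpansConnected (Es i)) ∧
      (∀ v : V, ∃ i, ∃ e ∈ Es i, v ∈ e) ∧
      ∀ i, c ≤ weight A {v | ∃ e ∈ Es i, v ∈ e} ∧
        (weight A {v | ∃ e ∈ Es i, v ∈ e} : ℝ) < 3 * c := by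
  obtain ⟨P, hP, hcover, hdisj⟩ := hp.exists_branch_partition A hfin hc univ (mem_univ r)
    (mapsTo_univ p univ) (by rwa [weight_univ])
  have hPi := fun i : Fin P.length => hP _ (List.get_mem P i)
  have hcover' : ∀ v, v ≠ r → ∃ i, v ∈ (P.get i).2 ∧ s(v, p v) ∈ parentEdges p (P.get i).2 := by
    intro v hv
    obtain ⟨q, hq, hvq⟩ := hcover v (mem_univ v) hv
    obtain ⟨i, rfl⟩ := List.get_of_mem hq
    exact ⟨i, hvq, v, hvq, rfl⟩
  refine ⟨P.length, fun i => parentEdges p (P.get i).2, fun i j hij => ?_, fun i => ?_,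
    fun i => ?_, fun i => ?_, fun v => ?_, fun i => ?_⟩
  · refine hp.disjoint_parentEdges (hPi i).2.1 (hPi j).2.1 ?_
    rcases lt_or_gt_of_ne hij with h | h
    exacts [hdisj.rel_get_of_lt h, (hdisj.rel_get_of_lt h).symm]
  · obtain ⟨-, -, hD, -⟩ := hPi i
    exact hD.1.image _
  · obtain ⟨-, hr, -⟩ := hPi i
    exact image_mono fun v hv hvr => hr (hvr ▸ hv)
  · obtain ⟨-, hr, hD, -⟩ := hPi i
    exact hp.spansConnected_parentEdges hD hr
  · rcases eq_or_ne v r with rfl | hv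
    · obtain ⟨x, hxv, hpx⟩ := hp.exists_map_eq_root
      obtain ⟨i, -, hi⟩ := hcover' x hxv
      exact ⟨i, _, hi, hpx ▸ Sym2.mem_mk_right x (p x)⟩
    · obtain ⟨i, -, hi⟩ := hcover' v hv
      exact ⟨i, _, hi, Sym2.mem_mk_left v (p v)⟩
  · obtain ⟨-, hr, hD, hweight⟩ := hPi i
    rw [hp.setOf_mem_parentEdges_of_isBranch hD hr]
    exact hweight

end IsParentMap

theorem SimpleGraph.Connected.exists_isParentMap {G : SimpleGraph V} (hG : G.Connected) (r : V) :
    ∃ p, IsParentMap p r (G.dist r) ∧ ∀ v, v ≠ r → G.Adj v (p v) := by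
  classical
  have h : ∀ v, v ≠ r → ∃ u, G.Adj v u ∧ G.dist r u < G.dist r v := by
    intro v hv
    obtain ⟨w, hw⟩ := hG.exists_walk_length_eq_dist v r
    cases w with
    | nil => exact absurd rfl hv
    | cons hadj q =>
      refine ⟨_, hadj, ?_⟩
      rw [dist_comm, dist_comm (u := r)]
      have := dist_le q
      rw [Walk.length_cons] at hw
      omega
  choose! f hf using h
  refine ⟨fun v => if v = r then r else f v, ⟨by simp, fun v hv => ?_⟩, fun v hv => ?_⟩
  · simpa [hv] using (hf v hv).2
  · simpa [hv] using (hf v hv).1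

theorem pow_pred_lt_of_le_sum {m n k : ℕ} {w : Fin m → ℕ} (hk : 1 ≤ k) (hn : 0 < n)
    (hsum : n ≤ ∑ i, w i) (hw : ∀ i, (w i : ℝ) < 3 * (n / 3 ^ k)) : 3 ^ (k - 1) < m := by
  obtain ⟨i₀⟩ : Nonempty (Fin m) := by
    by_contra h
    simp [not_nonempty_iff.mp h] at hsum
    omega
  have h₁ : (n : ℝ) < m * (3 * (n / 3 ^ k)) :=
    calc (n : ℝ) ≤ ∑ i, (w i : ℝ) := by exact_mod_cast hsum
      _ < ∑ _i : Fin m, 3 * ((n : ℝ) / 3 ^ k) :=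
        Finset.sum_lt_sum_of_nonempty ⟨i₀, Finset.mem_univ _⟩ fun i _ => hw i
      _ = m * (3 * (n / 3 ^ k)) := by simp
  have h₂ : (3 : ℝ) ^ k < 3 * m := by
    rw [← mul_div_assoc, ← mul_div_assoc, lt_div_iff₀ (by positivity)] at h₁
    have hn' : (0 : ℝ) < n := by exact_mod_cast hn
    nlinarith
  have h₃ : 3 * 3 ^ (k - 1) < 3 * m := by
    rw [← pow_succ', Nat.sub_add_cancel hk]
    exact_mod_cast h₂
  omega

end

/-- In a connected locally finite graph, for any finite vertex set `A` with
`|A| ≥ 3^k` there are `m ≥ 3^(k-1) + 1` disjoint nonempty edge sets, each spanning a connected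
subgraph, covering all vertices, whose incident-vertex sets each contain between `3^{-k}|A|`
(inclusive) and `3^{-k+1}|A|` (exclusive) vertices of `A`. -/
theorem divide_and_conquer {V : Type*} (G : SimpleGraph V)
    (hconn : G.Connected) (hlf : ∀ v : V, (G.neighborSet v).Finite)
    (k : ℕ) (hk : 1 ≤ k) (A : Finset V) (hA : 3 ^ k ≤ A.card) :
    ∃ (m : ℕ) (Es : Fin m → Set (Sym2 V)),
      3 ^ (k - 1) + 1 ≤ m ∧
      (∀ i j, i ≠ j → Disjoint (Es i) (Es j)) ∧
      (∀ i, (Es i).Nonempty) ∧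
      (∀ i, Es i ⊆ G.edgeSet) ∧
      (∀ i, SpansConnected (Es i)) ∧
      (∀ v : V, ∃ i, ∃ e ∈ Es i, v ∈ e) ∧
      (∀ i, (A.card : ℝ) / 3 ^ k ≤ (((A : Set V) ∩ {v | ∃ e ∈ Es i, v ∈ e}).ncard : ℝ) ∧
        (((A : Set V) ∩ {v | ∃ e ∈ Es i, v ∈ e}).ncard : ℝ) < 3 * (A.card : ℝ) / 3 ^ k) := by
  have h3k : 3 ≤ 3 ^ k := Nat.le_self_pow (by omega) 3
  obtain ⟨r, -, b, -, hrb⟩ := Finset.one_lt_card.mp (by omega : 1 < A.card)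
  have : Nontrivial V := nontrivial_of_ne r b hrb
  obtain ⟨p, hp, hadj⟩ := hconn.exists_isParentMap r
  have hfin : ∀ v, {u | p u = v}.Finite := fun v => ((hlf v).insert r).subset fun u hu =>
    (eq_or_ne u r).imp_right fun hur => hu ▸ (hadj u hur).symm
  have hc : 1 ≤ (A.card : ℝ) / 3 ^ k := by
    rw [one_le_div (by positivity)]
    exact_mod_cast hA
  obtain ⟨m, Es, hdisj, hne, hsub, hspan, hcover, hweight⟩ := hp.exists_parentEdges_partition A
    hfin hc (div_le_self (Nat.cast_nonneg _) (one_le_pow₀ (by norm_num)))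
  refine ⟨m, Es, pow_pred_lt_of_le_sum hk (by omega) (card_le_sum_weight A _ hcover)
    fun i => (hweight i).2, hdisj, hne, fun i => (hsub i).trans ?_, hspan, hcover,
    fun i => ⟨(hweight i).1, mul_div_assoc 3 (A.card : ℝ) _ ▸ (hweight i).2⟩⟩
  rintro _ ⟨v, hv, rfl⟩
  exact hadj v hv
end

section
/- Let p : [1, ∞) → [0, 1] be nonincreasing with p(λ · 3^k) ≤ p(λ)^{3^{k-1}} for all λ ≥ 1 and integers k ≥ 1, and let M ≥ 9 be such that p(M − 1) ≥ e^{−1}. Then for every 0 < ε ≤ 1 with ε M ≥ 1 and 9ε ≤ 1, one has 1 − p(ε M) ≤ 27 ε. -/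
/-!
Choose `k` with `3^(k+2) ε ≤ 1 < 3^(k+3) ε`. Then `εM · 3^(k+1) ≤ M/3 ≤ M - 1`, so monotonicity and
the bootstrap hypothesis give `e⁻¹ ≤ p(M-1) ≤ p(εM · 3^(k+1)) ≤ p(εM)^(3^k)`. Taking `3^k`-th roots,
`p(εM) ≥ exp(-3^(-k)) ≥ 1 - 3^(-k)`, and `3^(-k) = 27 / 3^(k+3) < 27 ε`.
-/

lemma one_sub_le_div_of_exp_neg_le_pow {q a : ℝ} {N : ℕ} (hq : 0 ≤ q) (hN : N ≠ 0)
    (h : Real.exp (-a) ≤ q ^ N) : 1 - q ≤ a / N := by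
  have hroot : Real.exp (-(a / N)) ≤ q := by
    refine le_of_pow_le_pow_left₀ hN hq ?_
    rwa [← Real.exp_nat_mul, mul_neg, mul_div_cancel₀ _ (by exact_mod_cast hN)]
  linarith [Real.add_one_le_exp (-(a / N))]

lemma exists_pow_add_mul_le_one_lt {b ε : ℝ} {m : ℕ} (hb : 1 < b) (hε : 0 < ε)
    (hm : b ^ m * ε ≤ 1) : ∃ k : ℕ, b ^ (k + m) * ε ≤ 1 ∧ 1 < b ^ (k + m + 1) * ε := by
  have hone : 1 ≤ ε⁻¹ :=
    one_le_inv_iff₀.mpr ⟨hε, (le_mul_of_one_le_left hε.le (one_le_pow₀ hb.le)).trans hm⟩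
  obtain ⟨n, hn_le, hn_lt⟩ := exists_nat_pow_near hone hb
  rw [← le_div_iff₀ hε, one_div] at hm
  have hmn : m ≤ n := by
    by_contra! hnm
    exact lt_irrefl _ (hn_lt.trans_le (hm.trans' (pow_le_pow_right₀ hb.le hnm)))
  refine ⟨n - m, ?_, ?_⟩ <;> rw [Nat.sub_add_cancel hmn]
  · rwa [← le_div_iff₀ hε, one_div]
  · rwa [← div_lt_iff₀ hε, one_div]

/-- If `p : [1,∞) → [0,1]` is nonincreasing with
`p(λ 3^k) ≤ p(λ)^{3^{k-1}}` for all `λ ≥ 1` and integers `k ≥ 1`, and `M ≥ 9` satisfies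
`p(M-1) ≥ e^{-1}`, then `1 - p(εM) ≤ 27ε` whenever `0 < ε ≤ 1`, `εM ≥ 1`, `9ε ≤ 1`. -/
theorem tail_bootstrap_lower (p : ℝ → ℝ)
    (hmono : AntitoneOn p (Set.Ici 1))
    (hrange : ∀ x : ℝ, 1 ≤ x → p x ∈ Set.Icc (0 : ℝ) 1)
    (hsub : ∀ lam : ℝ, 1 ≤ lam → ∀ k : ℕ, 1 ≤ k →
      p (lam * 3 ^ k) ≤ p lam ^ (3 ^ (k - 1) : ℕ))
    (M : ℝ) (hM : 9 ≤ M) (hpM : Real.exp (-1) ≤ p (M - 1)) :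
    ∀ ε : ℝ, 0 < ε → ε ≤ 1 → 1 ≤ ε * M → 9 * ε ≤ 1 → 1 - p (ε * M) ≤ 27 * ε := by
  intro ε hε _ hεM h9ε
  obtain ⟨k, hk_le, hk_lt⟩ := exists_pow_add_mul_le_one_lt (b := 3) (m := 2) (by norm_num) hε
    (by linarith)
  have hscaled : ε * M * 3 ^ (k + 1) ≤ M - 1 := by
    have : ε * M * 3 ^ (k + 1) = 3 ^ (k + 2) * ε * M / 3 := by ring
    rw [this]
    nlinarith
  have hone_le : (1 : ℝ) ≤ ε * M * 3 ^ (k + 1) :=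
    one_le_mul_of_one_le_of_one_le hεM (one_le_pow₀ (by norm_num))
  have hpow : Real.exp (-1) ≤ p (ε * M) ^ 3 ^ k :=
    calc Real.exp (-1) ≤ p (M - 1) := hpM
      _ ≤ p (ε * M * 3 ^ (k + 1)) := hmono hone_le (Set.mem_Ici.mpr (by linarith)) hscaled
      _ ≤ p (ε * M) ^ 3 ^ k := by simpa using hsub (ε * M) hεM (k + 1) (by omega)
  calc 1 - p (ε * M) ≤ 1 / (3 ^ k : ℕ) :=
        one_sub_le_div_of_exp_neg_le_pow (hrange _ hεM).1 (by positivity) hpow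
    _ = 27 / 3 ^ (k + 2 + 1) := by push_cast; ring
    _ ≤ 27 * ε := by
        rw [div_le_iff₀ (by positivity)]
        linarith
end
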